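/- arXiv:2302.13723 — 2 statements merged into one kernel-verified Lean document; each statement's English description precedes it below -/
import Mathlib

section
/- Let p, q > 0 with p + q ≤ 1 and f(x,y) = (log⁻|x|)^p (log⁻|y|)^q, where log⁻|x| = max{0, −log|x|}. Then f does not have bounded mean oscillation on rectangles: sup{ O(f,R) : R ⊂ ℝ² a closed axis-parallel rectangle of positive area } = ∞. -/
/-!
On the thin rectangle `[0, δ] × [0, 1]` the function is a product `g(x) h(y)`, so its mean is
`⨍g · ⨍h`. Integrating `f - ⨍f` over the lower half `[0, δ] × [0, 1/2]` bounds the oscillation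
from below by `½ ⨍_{[0,δ]} g · (⨍_{[0,1/2]} h - ⨍_{[0,1]} h)`. The second factor is a positive
constant because `h = (log⁻)^q` is strictly decreasing on `(0, 1]`, while the first is at least
`(log⁻ δ)^p`, which tends to infinity as `δ → 0`.
-/

open MeasureTheory Set Filter
open scoped ENNReal Topology

/-- Mean oscillation of `f : ℝ × ℝ → ℝ` over `E ⊆ ℝ²`. -/
noncomputable def osc2 (f : ℝ × ℝ → ℝ) (E : Set (ℝ × ℝ)) : ℝ :=
  ⨍ p in E, |f p - ⨍ q in E, f q|

/-- The negative part of the logarithm: `log⁻|x| = max {0, −log|x|}`. -/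
noncomputable def logMinus (x : ℝ) : ℝ := max 0 (-Real.log |x|)

lemma logMinus_nonneg (x : ℝ) : 0 ≤ logMinus x := le_max_left _ _

lemma logMinus_of_pos_of_le_one {x : ℝ} (hx₀ : 0 < x) (hx₁ : x ≤ 1) : logMinus x = -Real.log x := by
  rw [logMinus, abs_of_pos hx₀, max_eq_right (neg_nonneg.2 (Real.log_nonpos hx₀.le hx₁))]

lemma measurable_logMinus_rpow {r : ℝ} : Measurable fun x => logMinus x ^ r :=
  (measurable_const.max (Real.measurable_log.comp measurable_abs).neg).pow_const r

lemma antitoneOn_logMinus : AntitoneOn logMinus (Ioi 0) := fun x (hx : 0 < x) y _ hxy => by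
  simp only [logMinus, abs_of_pos hx, abs_of_pos (lt_of_lt_of_le hx hxy)]
  exact max_le_max le_rfl (neg_le_neg (Real.log_le_log hx hxy))

lemma strictAntiOn_logMinus_rpow {r : ℝ} (hr : 0 < r) :
    StrictAntiOn (fun x => logMinus x ^ r) (Ioc 0 1) := fun x hx y hy hxy => by
  simp only [logMinus_of_pos_of_le_one hx.1 hx.2, logMinus_of_pos_of_le_one hy.1 hy.2]
  exact Real.rpow_lt_rpow (neg_nonneg.2 (Real.log_nonpos hy.1.le hy.2))
    (neg_lt_neg (Real.log_lt_log hx.1 hxy)) hr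

lemma tendsto_logMinus_nhdsNE_zero : Tendsto logMinus (𝓝[≠] 0) atTop :=
  tendsto_atTop_mono (fun x => by rw [Function.comp_apply, ← Real.log_abs]; exact le_max_right _ _)
    (tendsto_neg_atBot_atTop.comp Real.tendsto_log_nhdsNE_zero)

lemma logMinus_le_rpow_div {ε : ℝ} (hε : 0 < ε) (x : ℝ) : logMinus x ≤ |x| ^ (-ε) / ε := by
  refine max_le (by positivity) ?_
  have h := Real.log_le_rpow_div (inv_nonneg.2 (abs_nonneg x)) hε
  rwa [Real.log_inv, Real.inv_rpow (abs_nonneg x), ← Real.rpow_neg (abs_nonneg x)] at h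

lemma logMinus_rpow_le {r : ℝ} (hr : 0 < r) (x : ℝ) :
    logMinus x ^ r ≤ (2 * r) ^ r * |x| ^ (-(1 / 2) : ℝ) := by
  have hε : 0 < (2 * r)⁻¹ := by positivity
  calc logMinus x ^ r ≤ (|x| ^ (-(2 * r)⁻¹) / (2 * r)⁻¹) ^ r :=
        Real.rpow_le_rpow (logMinus_nonneg x) (logMinus_le_rpow_div hε x) hr.le
    _ = (2 * r) ^ r * |x| ^ (-(1 / 2) : ℝ) := by
        rw [div_inv_eq_mul, Real.mul_rpow (by positivity) (by positivity), mul_comm,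
          ← Real.rpow_mul (abs_nonneg x)]
        congr 2
        field_simp

lemma integrableOn_logMinus_rpow {r : ℝ} (hr : 0 < r) (b : ℝ) :
    IntegrableOn (fun x => logMinus x ^ r) (Icc 0 b) := by
  have hsqrt : IntegrableOn (fun x : ℝ => x ^ (-(1 / 2) : ℝ)) (Icc 0 b) :=
    ((intervalIntegrable_iff' (μ := volume)).1
      (intervalIntegral.intervalIntegrable_rpow' (by norm_num))).mono_set Icc_subset_uIcc
  refine (hsqrt.const_mul ((2 * r) ^ r)).mono' measurable_logMinus_rpow.aestronglyMeasurable ?_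
  refine (ae_restrict_iff' measurableSet_Icc).2 (Eventually.of_forall fun x hx => ?_)
  rw [Real.norm_of_nonneg (Real.rpow_nonneg (logMinus_nonneg x) r)]
  simpa only [abs_of_nonneg hx.1] using logMinus_rpow_le hr x

lemma le_setAverage_of_forall_le {α : Type*} [MeasurableSpace α] {μ : Measure α} {s : Set α}
    {f : α → ℝ} {c : ℝ} (hs : MeasurableSet s) (hμ₀ : μ s ≠ 0) (hμ : μ s ≠ ∞)
    (hf : IntegrableOn f s μ) (hc : ∀ x ∈ s, c ≤ f x) : c ≤ ⨍ x in s, f x ∂μ := by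
  rw [← setAverage_const hμ₀ hμ c, setAverage_eq, setAverage_eq]
  exact smul_le_smul_of_nonneg_left (setIntegral_mono_on (integrableOn_const hμ) hf hs hc)
    (inv_nonneg.2 measureReal_nonneg)

lemma setAverage_prod_mul {α β : Type*} [MeasurableSpace α] [MeasurableSpace β] {μ : Measure α}
    {ν : Measure β} [SFinite μ] [SFinite ν] (f : α → ℝ) (g : β → ℝ) (s : Set α) (t : Set β) :
    ⨍ z in s ×ˢ t, f z.1 * g z.2 ∂μ.prod ν = (⨍ x in s, f x ∂μ) * ⨍ y in t, g y ∂ν := by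
  simp only [setAverage_eq, measureReal_prod_prod, setIntegral_prod_mul, smul_eq_mul, mul_inv]
  ring

lemma setAverage_Icc_eq_intervalIntegral {f : ℝ → ℝ} {a b : ℝ} (hab : a ≤ b) :
    ⨍ x in Icc a b, f x = (b - a)⁻¹ * ∫ x in a..b, f x := by
  rw [setAverage_eq, Real.volume_real_Icc_of_le hab, integral_Icc_eq_integral_Ioc,
    ← intervalIntegral.integral_of_le hab, smul_eq_mul]

lemma setAverage_Icc_lt_setAverage_Icc_left_half {h : ℝ → ℝ} {a b : ℝ} (hab : a < b)
    (hh : StrictAntiOn h (Ioo a b)) (hint : IntegrableOn h (Icc a b)) :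
    ⨍ y in Icc a b, h y < ⨍ y in Icc a ((a + b) / 2), h y := by
  set c := (a + b) / 2
  set l := (b - a) / 2
  have hl : 0 < l := by simp only [l]; linarith
  have hal : a + l = c := by simp only [c, l]; ring
  have hcl : c + l = b := by simp only [c, l]; ring
  have hac : a < c := by linarith
  have hcb : c < b := by linarith
  have hint_ac : IntervalIntegrable h volume a c :=
    (intervalIntegrable_iff_integrableOn_Icc_of_le hac.le).2
      (hint.mono_set (Icc_subset_Icc_right hcb.le))
  have hint_cb : IntervalIntegrable h volume c b :=
    (intervalIntegrable_iff_integrableOn_Icc_of_le hcb.le).2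
      (hint.mono_set (Icc_subset_Icc_left hac.le))
  have hshift : IntervalIntegrable (fun y => h (y + l)) volume a c := by
    have := hint_cb.comp_add_right l
    rwa [← hal, ← hcl, add_sub_cancel_right, add_sub_cancel_right] at this
  have hright : ∫ y in c..b, h y = ∫ y in a..c, h (y + l) := by
    rw [intervalIntegral.integral_comp_add_right, hal, hcl]
  have hgap : 0 < ∫ y in a..c, (h y - h (y + l)) :=
    intervalIntegral.intervalIntegral_pos_of_pos_on (hint_ac.sub hshift)
      (fun y hy => sub_pos.2 (hh ⟨hy.1, hy.2.trans hcb⟩ ⟨by linarith [hy.1], by linarith [hy.2]⟩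
        (by linarith)))
      hac
  rw [intervalIntegral.integral_sub hint_ac hshift] at hgap
  rw [setAverage_Icc_eq_intervalIntegral hab.le, setAverage_Icc_eq_intervalIntegral hac.le,
    ← intervalIntegral.integral_add_adjacent_intervals hint_ac hint_cb, hright,
    show b - a = 2 * l by linarith, show c - a = l by linarith]
  rw [mul_inv, mul_comm (2⁻¹ : ℝ), mul_assoc]
  exact mul_lt_mul_of_pos_left (by linarith) (inv_pos.2 hl)

lemma logMinus_rpow_le_setAverage {r δ : ℝ} (hr : 0 < r) (hδ : 0 < δ) :
    logMinus δ ^ r ≤ ⨍ x in Icc 0 δ, logMinus x ^ r := by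
  rw [← setAverage_congr Ioc_ae_eq_Icc]
  exact le_setAverage_of_forall_le measurableSet_Ioc (by simpa using hδ) measure_Ioc_lt_top.ne
    ((integrableOn_logMinus_rpow hr δ).mono_set Ioc_subset_Icc_self)
    fun x hx => Real.rpow_le_rpow (logMinus_nonneg δ) (antitoneOn_logMinus hx.1 hδ hx.2) hr.le

lemma setIntegral_sub_setAverage_le_osc2 {F : ℝ × ℝ → ℝ} {A E : Set (ℝ × ℝ)} (hAE : A ⊆ E)
    (hE : volume E ≠ ∞) (hF : IntegrableOn F E) :
    ∫ z in A, (F z - ⨍ w in E, F w) ≤ volume.real E * osc2 F E := by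
  set m := ⨍ w in E, F w
  have hdev : IntegrableOn (fun z => F z - m) E := hF.sub (integrableOn_const hE)
  calc ∫ z in A, (F z - m) ≤ ∫ z in A, |F z - m| :=
        setIntegral_mono (hdev.mono_set hAE) (IntegrableOn.mono_set hdev.abs hAE)
          fun z => le_abs_self _
    _ ≤ ∫ z in E, |F z - m| :=
        setIntegral_mono_set hdev.abs (Eventually.of_forall fun z => abs_nonneg _) hAE.eventuallyLE
    _ = volume.real E * osc2 F E := (measure_smul_setAverage _ hE).symm

lemma setAverage_mul_sub_le_osc2 (g h : ℝ → ℝ) {I J J' : Set ℝ} (hJ' : J' ⊆ J)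
    (hI₀ : volume I ≠ 0) (hI : volume I ≠ ∞) (hJ : volume J ≠ ∞)
    (hg : IntegrableOn g I) (hh : IntegrableOn h J) :
    volume.real J' * ((⨍ x in I, g x) * ((⨍ y in J', h y) - ⨍ y in J, h y)) ≤
      volume.real J * osc2 (fun z => g z.1 * h z.2) (I ×ˢ J) := by
  set F : ℝ × ℝ → ℝ := fun z => g z.1 * h z.2
  have hIJ : volume (I ×ˢ J) ≠ ∞ := by
    rw [Measure.volume_eq_prod, Measure.prod_prod]; exact ENNReal.mul_ne_top hI hJ
  have hIJ' : volume (I ×ˢ J') ≠ ∞ := ne_top_of_le_ne_top hIJ (measure_mono (prod_mono le_rfl hJ'))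
  have hF : IntegrableOn F (I ×ˢ J) := by
    rw [IntegrableOn, Measure.volume_eq_prod, ← Measure.prod_restrict]
    exact hg.mul_prod hh
  have hsub := setIntegral_sub_setAverage_le_osc2 (prod_mono le_rfl hJ') hIJ hF
  rw [integral_sub (hF.mono_set (prod_mono le_rfl hJ')) (integrableOn_const hIJ'),
    setIntegral_const, ← measure_smul_setAverage _ hIJ', smul_eq_mul, smul_eq_mul,
    Measure.volume_eq_prod, setAverage_prod_mul, setAverage_prod_mul, measureReal_prod_prod,
    measureReal_prod_prod] at hsub
  have hIpos : 0 < volume.real I := ENNReal.toReal_pos hI₀ hI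
  refine le_of_mul_le_mul_left ?_ hIpos
  linear_combination hsub

theorem logp_logq_not_strong_bmo_general (p q : ℝ) (hp : 0 < p) (hq : 0 < q) :
    ∀ C : ℝ, ∃ a₁ b₁ a₂ b₂ : ℝ, a₁ < b₁ ∧ a₂ < b₂ ∧
      C < osc2 (fun z : ℝ × ℝ => logMinus z.1 ^ p * logMinus z.2 ^ q)
            (Icc a₁ b₁ ×ˢ Icc a₂ b₂) := by
  intro C
  set Δ := (⨍ y in Icc (0 : ℝ) (1 / 2), logMinus y ^ q) - ⨍ y in Icc (0 : ℝ) 1, logMinus y ^ q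
  have hΔ : 0 < Δ := by
    have h := setAverage_Icc_lt_setAverage_Icc_left_half one_pos
      ((strictAntiOn_logMinus_rpow hq).mono Ioo_subset_Ioc_self) (integrableOn_logMinus_rpow hq 1)
    rw [zero_add] at h
    exact sub_pos.2 h
  obtain ⟨δ, hδC, hδ⟩ : ∃ δ, C < logMinus δ ^ p * (Δ / 2) ∧ 0 < δ :=
    have hblowup : Tendsto (fun x => logMinus x ^ p) (𝓝[>] 0) atTop :=
      (tendsto_rpow_atTop hp).comp (tendsto_logMinus_nhdsNE_zero.mono_left (nhdsGT_le_nhdsNE 0))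
    ((hblowup.atTop_mul_const (half_pos hΔ)).eventually_gt_atTop C |>.and
      self_mem_nhdsWithin).exists
  refine ⟨0, δ, 0, 1, hδ, one_pos, hδC.trans_le ?_⟩
  have hosc := setAverage_mul_sub_le_osc2 (fun x => logMinus x ^ p) (fun y => logMinus y ^ q)
    (Icc_subset_Icc_right (by norm_num : (1 / 2 : ℝ) ≤ 1)) (by simpa using hδ) measure_Icc_lt_top.ne
    measure_Icc_lt_top.ne (integrableOn_logMinus_rpow hp δ) (integrableOn_logMinus_rpow hq 1)
  rw [Real.volume_real_Icc_of_le (by norm_num), Real.volume_real_Icc_of_le zero_le_one] at hosc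
  calc logMinus δ ^ p * (Δ / 2) ≤ (⨍ x in Icc 0 δ, logMinus x ^ p) * (Δ / 2) :=
        mul_le_mul_of_nonneg_right (logMinus_rpow_le_setAverage hp hδ) (by positivity)
    _ ≤ _ := by linarith

/-- for `p, q > 0` with `p + q ≤ 1`, the function
`f(x,y) = (log⁻|x|)^p (log⁻|y|)^q` does not have bounded mean oscillation on
rectangles: the supremum of `O(f,R)` over closed axis-parallel rectangles of positive
area is infinite. -/
theorem logp_logq_not_strong_bmo (p q : ℝ) (hp : 0 < p) (hq : 0 < q) (hpq : p + q ≤ 1) :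
    ∀ C : ℝ, ∃ a₁ b₁ a₂ b₂ : ℝ, a₁ < b₁ ∧ a₂ < b₂ ∧
      C < osc2 (fun z : ℝ × ℝ => logMinus z.1 ^ p * logMinus z.2 ^ q)
            (Icc a₁ b₁ ×ˢ Icc a₂ b₂) :=
  logp_logq_not_strong_bmo_general p q hp hq
end

section
/- There exists a dimensional constant C(n) such that: if f ∈ BMO(ℝⁿ) is supported in Q₀ = [−1,1]ⁿ, and (x_k)_{k∈ℕ} is a sequence of points in ℝⁿ with |x_k − x_m| ≥ 3√n for all k ≠ m, then the function g(x) = Σ_k f(x − x_k) (the sum is locally finite, since the translated supports are pairwise disjoint) belongs to BMO(ℝⁿ) and ‖g‖_{BMO(ℝⁿ)} ≤ C(n) ‖f‖_{BMO(ℝⁿ)}. -/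
/-!
Write `g = ∑ₖ f(· - xₖ)`. The translated supports are closed sup-norm balls of radius `1` around
points that are `3` apart in the sup norm. A cube of side `l < 1` meets at most one of them, so on
it `g` is a single translate of `f` and its oscillation is at most `‖f‖_BMO`. On a cube of side
`l ≥ 1` the oscillation is at most twice the mean of `|g|`; by volume packing only `O(lⁿ)`
translates meet the cube, each contributing at most `‖f‖_{L¹}`. Finally `‖f‖_{L¹} ≲ ‖f‖_BMO`
because `f` vanishes on a subcube of a fixed cube containing its support.
-/

open MeasureTheory Set Filter
open scoped ENNReal Topology

/-- Mean oscillation of `f` over `A ⊆ ℝⁿ`. -/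
noncomputable def oscN {n : ℕ} (f : (Fin n → ℝ) → ℝ) (A : Set (Fin n → ℝ)) : ℝ :=
  ⨍ x in A, |f x - ⨍ y in A, f y|

/-- The closed axis-parallel cube with lower corner `a` and side length `l`. -/
def cube {n : ℕ} (a : Fin n → ℝ) (l : ℝ) : Set (Fin n → ℝ) :=
  Set.Icc a (fun i => a i + l)

/-- BMO(ℝⁿ) seminorm. -/
noncomputable def bmoN {n : ℕ} (f : (Fin n → ℝ) → ℝ) : ℝ≥0∞ :=
  ⨆ (a : Fin n → ℝ) (l : ℝ) (_ : 0 < l), ENNReal.ofReal (oscN f (cube a l))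

open Metric Module Function

section MeanOscillation

variable {α : Type*} [MeasurableSpace α] {μ : Measure α} {f : α → ℝ} {s t : Set α}

lemma setIntegral_abs_le_setIntegral_abs_sub_add (hf : IntegrableOn f s μ) (hs : μ s ≠ ∞)
    (c : ℝ) : ∫ x in s, |f x| ∂μ ≤ ∫ x in s, |f x - c| ∂μ + μ.real s * |c| := by
  have hc : IntegrableOn (fun _ => c) s μ := integrableOn_const hs
  have hsub : IntegrableOn (fun x => |f x - c|) s μ := (hf.sub hc).abs
  calc ∫ x in s, |f x| ∂μ ≤ ∫ x in s, (|f x - c| + |c|) ∂μ :=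
        integral_mono hf.abs (hsub.add hc.abs) fun x => by simpa using abs_add_le (f x - c) c
    _ = ∫ x in s, |f x - c| ∂μ + μ.real s * |c| := by
        rw [integral_add hsub hc.abs, setIntegral_const, smul_eq_mul]

lemma measureReal_mul_abs_setAverage_le (hs : μ s ≠ ∞) :
    μ.real s * |⨍ x in s, f x ∂μ| ≤ ∫ x in s, |f x| ∂μ := by
  rw [← abs_of_nonneg measureReal_nonneg, ← abs_mul, ← smul_eq_mul, measure_smul_setAverage f hs]
  exact abs_integral_le_integral_abs

lemma setIntegral_abs_sub_setAverage_le (hf : IntegrableOn f s μ) (hs : μ s ≠ ∞) :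
    ∫ x in s, |f x - ⨍ y in s, f y ∂μ| ∂μ ≤ 2 * ∫ x in s, |f x| ∂μ := by
  set c := ⨍ y in s, f y ∂μ
  have h := setIntegral_abs_le_setIntegral_abs_sub_add (f := fun x => f x - c)
    (hf.sub (integrableOn_const hs)) hs (-c)
  simp only [sub_neg_eq_add, sub_add_cancel, abs_neg] at h
  linarith [measureReal_mul_abs_setAverage_le (f := f) hs]

/-- On `t` the deviation of `f` from its mean over `s` is the mean itself. -/
lemma measureReal_mul_setIntegral_abs_le_of_ae_eq_zero (hts : t ⊆ s) (hf : IntegrableOn f s μ)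
    (hs : μ s ≠ ∞) (hft : ∀ᵐ x ∂μ.restrict t, f x = 0) :
    μ.real t * ∫ x in s, |f x| ∂μ ≤
      (μ.real s + μ.real t) * ∫ x in s, |f x - ⨍ y in s, f y ∂μ| ∂μ := by
  set c := ⨍ y in s, f y ∂μ
  set I := ∫ x in s, |f x - c| ∂μ
  have hct : μ.real t * |c| ≤ I := by
    have hI : ∫ x in t, |f x - c| ∂μ = μ.real t * |c| := by
      rw [integral_congr_ae (g := fun _ => |c|) (hft.mono fun x hx => by simp [hx]),
        setIntegral_const, smul_eq_mul]
    rw [← hI]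
    exact setIntegral_mono_set (hf.sub (integrableOn_const hs)).abs
      (ae_of_all _ fun _ => abs_nonneg _) hts.eventuallyLE
  have hI0 : 0 ≤ I := integral_nonneg fun _ => abs_nonneg _
  calc μ.real t * ∫ x in s, |f x| ∂μ ≤ μ.real t * (I + μ.real s * |c|) :=
        mul_le_mul_of_nonneg_left (setIntegral_abs_le_setIntegral_abs_sub_add hf hs c)
          measureReal_nonneg
    _ = μ.real t * I + μ.real s * (μ.real t * |c|) := by ring
    _ ≤ μ.real t * I + μ.real s * I := by gcongr
    _ = (μ.real s + μ.real t) * I := by ring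

end MeanOscillation

section SupNorm

lemma Icc_const_neg_const_eq_closedBall {ι : Type*} [Fintype ι] {r : ℝ} (hr : 0 ≤ r) :
    Icc (fun _ : ι => -r) (fun _ => r) = closedBall 0 r := by
  rw [closedBall_pi _ hr, ← pi_univ_Icc]
  simp [Real.closedBall_eq_Icc]

variable {n : ℕ}

lemma le_dist_of_mul_sqrt_le (hn : 0 < n) {δ : ℝ} {u v : Fin n → ℝ}
    (h : δ * √n ≤ √(∑ i, (u i - v i) ^ 2)) : δ ≤ dist u v := by
  have hsum : ∑ i, (u i - v i) ^ 2 ≤ n * dist u v ^ 2 :=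
    calc ∑ i, (u i - v i) ^ 2 ≤ ∑ _i : Fin n, dist u v ^ 2 := Finset.sum_le_sum fun i _ => by
          rw [← sq_abs, ← Real.dist_eq]
          exact pow_le_pow_left₀ dist_nonneg (dist_le_pi_dist u v i) 2
      _ = n * dist u v ^ 2 := by simp
  have hsqrt : √(∑ i, (u i - v i) ^ 2) ≤ √n * dist u v := by
    rw [← Real.sqrt_sq (dist_nonneg (x := u) (y := v)), ← Real.sqrt_mul n.cast_nonneg]
    exact Real.sqrt_le_sqrt hsum
  have hpos : 0 < √(n : ℝ) := Real.sqrt_pos.2 (by exact_mod_cast hn)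
  exact le_of_mul_le_mul_right (by linarith [mul_comm (√(n : ℝ)) (dist u v)]) hpos

end SupNorm

section Cubes

variable {n : ℕ}

lemma oscN_congr {f g : (Fin n → ℝ) → ℝ} {A : Set (Fin n → ℝ)} (hA : MeasurableSet A)
    (h : EqOn f g A) : oscN f A = oscN g A := by
  have havg : ⨍ y in A, f y = ⨍ y in A, g y := setAverage_congr_fun hA (ae_of_all _ h)
  rw [oscN, oscN, havg]
  exact setAverage_congr_fun hA (ae_of_all _ fun y hy => by rw [h hy])

lemma cube_eq_closedBall (a : Fin n → ℝ) {l : ℝ} (hl : 0 ≤ l) :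
    cube a l = closedBall (fun i => a i + l / 2) (l / 2) := by
  ext y
  simp only [cube, mem_Icc, mem_closedBall, dist_pi_le_iff (by linarith : 0 ≤ l / 2),
    Real.dist_eq, abs_le, Pi.le_def, ← forall_and]
  refine forall_congr' fun i => ?_
  constructor <;> rintro ⟨h₁, h₂⟩ <;> constructor <;> linarith

lemma volume_real_cube (a : Fin n → ℝ) {l : ℝ} (hl : 0 ≤ l) : volume.real (cube a l) = l ^ n := by
  rw [measureReal_def, cube_eq_closedBall a hl, Real.volume_pi_closedBall _ (by linarith),
    Fintype.card_fin, mul_div_cancel₀ _ two_ne_zero, ENNReal.toReal_ofReal (by positivity)]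

lemma oscN_comp_sub (f : (Fin n → ℝ) → ℝ) (v : Fin n → ℝ) (A : Set (Fin n → ℝ)) :
    oscN (fun y => f (y - v)) ((· - v) ⁻¹' A) = oscN f A := by
  have he := measurePreserving_sub_right (volume : Measure (Fin n → ℝ)) v
  have hemb : MeasurableEmbedding (· - v : (Fin n → ℝ) → Fin n → ℝ) :=
    (MeasurableEquiv.subRight v).measurableEmbedding
  have havg (g : (Fin n → ℝ) → ℝ) : ⨍ y in (· - v) ⁻¹' A, g (y - v) = ⨍ y in A, g y := by
    rw [setAverage_eq, setAverage_eq, measureReal_def, measureReal_def,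
      he.measure_preimage_emb hemb, he.setIntegral_preimage_emb hemb]
  rw [oscN, havg f]
  exact havg fun y => |f y - ⨍ z in A, f z|

lemma oscN_comp_sub_cube (f : (Fin n → ℝ) → ℝ) (v a : Fin n → ℝ) (l : ℝ) :
    oscN (fun y => f (y - v)) (cube a l) = oscN f (cube (a - v) l) := by
  rw [← oscN_comp_sub f v, cube, cube, preimage_sub_const_Icc]
  congr 2 <;> funext i <;> simp only [Pi.add_apply, Pi.sub_apply] <;> ring

lemma oscN_le_two_mul_setIntegral_abs {f : (Fin n → ℝ) → ℝ} {a : Fin n → ℝ} {l : ℝ}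
    (hl : 0 < l) (hf : IntegrableOn f (cube a l)) :
    oscN f (cube a l) ≤ 2 * (l ^ n)⁻¹ * ∫ y in cube a l, |f y| := by
  have hfin : volume (cube a l) ≠ ∞ := by
    rw [cube]; exact measure_Icc_lt_top.ne
  rw [oscN, setAverage_eq, smul_eq_mul, volume_real_cube a hl.le, mul_comm 2, mul_assoc]
  exact mul_le_mul_of_nonneg_left (setIntegral_abs_sub_setAverage_le hf hfin) (by positivity)

lemma oscN_le_toReal_bmoN {f : (Fin n → ℝ) → ℝ} (hb : bmoN f ≠ ⊤) (a : Fin n → ℝ) {l : ℝ}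
    (hl : 0 < l) : oscN f (cube a l) ≤ (bmoN f).toReal := by
  refine (ENNReal.ofReal_le_iff_le_toReal hb).1 ?_
  exact le_iSup_of_le a (le_iSup_of_le l (le_iSup_of_le hl le_rfl))

lemma bmoN_le_ofReal {f : (Fin n → ℝ) → ℝ} {K : ℝ}
    (h : ∀ a l, 0 < l → oscN f (cube a l) ≤ K) : bmoN f ≤ ENNReal.ofReal K :=
  iSup_le fun a => iSup_le fun l => iSup_le fun hl => ENNReal.ofReal_le_ofReal (h a l hl)

end Cubes

section SeparatedTranslates

variable {E β : Type*} [NormedAddCommGroup E] {x : β → E} {f : E → ℝ} {r : ℝ}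

lemma dist_le_one_of_comp_sub_ne_zero (hf : support f ⊆ closedBall 0 1) {y v : E}
    (hy : f (y - v) ≠ 0) : dist y v ≤ 1 := by
  simpa [dist_eq_norm] using hf hy

lemma eqOn_tsum_comp_sub_sum (hf : support f ⊆ closedBall 0 1) {c : E} {R : ℝ} {F : Finset β}
    (hF : ∀ k, dist (x k) c ≤ R + 1 → k ∈ F) :
    EqOn (fun y => ∑' k, f (y - x k)) (fun y => ∑ k ∈ F, f (y - x k)) (closedBall c R) :=
  fun y hy => tsum_eq_sum fun k hk => by
    by_contra hne
    refine hk (hF k ?_)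
    linarith [dist_triangle_left (x k) c y, dist_le_one_of_comp_sub_ne_zero hf hne,
      mem_closedBall.1 hy]

/-- Two translated supports meeting a ball of diameter `< 1` would force two of the points
within distance `< 3` of each other. -/
lemma exists_eqOn_tsum_comp_sub [Nonempty β] (hf : support f ⊆ closedBall 0 1)
    (hx : Pairwise fun k m => 3 ≤ dist (x k) (x m)) {c : E} {ρ : ℝ} (hρ : ρ < 1 / 2) :
    ∃ k, EqOn (fun y => ∑' m, f (y - x m)) (fun y => f (y - x k)) (closedBall c ρ) := by
  by_cases h : ∃ k, ∃ y ∈ closedBall c ρ, f (y - x k) ≠ 0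
  · obtain ⟨k, y₀, hy₀, hk⟩ := h
    refine ⟨k, fun y hy => tsum_eq_single k fun m hm => ?_⟩
    by_contra hne
    linarith [hx hm, dist_triangle4 (x m) y y₀ (x k), dist_le_one_of_comp_sub_ne_zero hf hne,
      dist_le_one_of_comp_sub_ne_zero hf hk, dist_triangle_right y y₀ c, mem_closedBall.1 hy,
      mem_closedBall.1 hy₀, dist_comm y (x m)]
  · push Not at h
    exact ⟨Classical.arbitrary β, fun y hy => by simp [h _ y hy]⟩

variable [NormedSpace ℝ E] [FiniteDimensional ℝ E]

/-- Volume packing: the balls of radius `r / 2` around the points are disjoint and lie in a ball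
of radius `R + r / 2`. -/
lemma card_mul_pow_le_of_pairwise_le_dist (hr : 0 < r)
    (hx : Pairwise fun k m => r ≤ dist (x k) (x m)) {c : E} {R : ℝ} (hR : 0 ≤ R)
    {F : Finset β} (hF : ∀ k ∈ F, dist (x k) c ≤ R) :
    (F.card : ℝ) * (r / 2) ^ finrank ℝ E ≤ (R + r / 2) ^ finrank ℝ E := by
  let _ : MeasurableSpace E := borel E
  have : BorelSpace E := ⟨rfl⟩
  set μ : Measure E := Measure.addHaar
  have hdisj : (F : Set β).PairwiseDisjoint fun k => ball (x k) (r / 2) := fun k _ m _ hkm =>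
    ball_disjoint_ball (by linarith [hx hkm])
  have hsub : (⋃ k ∈ F, ball (x k) (r / 2)) ⊆ ball c (R + r / 2) :=
    iUnion₂_subset fun k hk z hz => by
      rw [mem_ball] at hz ⊢
      linarith [dist_triangle z (x k) c, hF k hk]
  have hvol := (measure_biUnion_finset hdisj fun _ _ => measurableSet_ball).symm.trans_le
    (measure_mono (μ := μ) hsub)
  simp only [Measure.addHaar_ball_of_pos μ _ (half_pos hr),
    Measure.addHaar_ball_of_pos μ _ (by positivity : 0 < R + r / 2), Finset.sum_const,
    nsmul_eq_mul, ← mul_assoc] at hvol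
  have hball := (ENNReal.mul_le_mul_iff_left (measure_ball_pos μ (0 : E) one_pos).ne'
    measure_ball_lt_top.ne).1 hvol
  rw [← ENNReal.ofReal_natCast, ← ENNReal.ofReal_mul (by positivity)] at hball
  exact (ENNReal.ofReal_le_ofReal_iff (by positivity)).1 hball

lemma finite_setOf_dist_le (hr : 0 < r) (hx : Pairwise fun k m => r ≤ dist (x k) (x m))
    (c : E) (R : ℝ) : {k | dist (x k) c ≤ R}.Finite := by
  suffices h : {k | dist (x k) c ≤ max R 0}.Finite from
    h.subset fun k (hk : dist (x k) c ≤ R) => le_max_of_le_left hk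
  by_contra hinf
  set d := finrank ℝ E
  obtain ⟨F, hF, hcard⟩ := Set.Infinite.exists_subset_card_eq hinf
    (⌈(max R 0 + r / 2) ^ d / (r / 2) ^ d⌉₊ + 1)
  have hle := card_mul_pow_le_of_pairwise_le_dist hr hx (le_max_right R 0) fun k hk => hF hk
  rw [← le_div_iff₀ (by positivity), hcard] at hle
  push_cast at hle
  linarith [Nat.le_ceil ((max R 0 + r / 2) ^ d / (r / 2) ^ d)]

variable [MeasurableSpace E] [BorelSpace E] {μ : Measure E} [μ.IsAddRightInvariant]

lemma integrableOn_tsum_comp_sub (hfi : Integrable f μ) (hf : support f ⊆ closedBall 0 1)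
    (hr : 0 < r) (hx : Pairwise fun k m => r ≤ dist (x k) (x m)) (c : E) (R : ℝ) :
    IntegrableOn (fun y => ∑' k, f (y - x k)) (closedBall c R) μ := by
  set F := (finite_setOf_dist_le hr hx c (R + 1)).toFinset
  refine IntegrableOn.congr_fun ?_ (eqOn_tsum_comp_sub_sum hf (F := F) fun k hk => by
    simpa [F] using hk).symm measurableSet_closedBall
  exact (integrable_finsetSum F fun k _ => hfi.comp_sub_right (x k)).integrableOn

lemma locallyIntegrable_tsum_comp_sub (hfi : Integrable f μ) (hf : support f ⊆ closedBall 0 1)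
    (hr : 0 < r) (hx : Pairwise fun k m => r ≤ dist (x k) (x m)) :
    LocallyIntegrable (fun y => ∑' k, f (y - x k)) μ := by
  refine locallyIntegrable_iff.2 fun K hK => ?_
  obtain ⟨R, hR⟩ := hK.isBounded.subset_closedBall 0
  exact (integrableOn_tsum_comp_sub hfi hf hr hx 0 R).mono_set hR

lemma pow_mul_setIntegral_abs_tsum_comp_sub_le (hfi : Integrable f μ)
    (hf : support f ⊆ closedBall 0 1) (hr : 0 < r)
    (hx : Pairwise fun k m => r ≤ dist (x k) (x m)) (c : E) {R : ℝ} (hR : 0 ≤ R) :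
    (r / 2) ^ finrank ℝ E * ∫ y in closedBall c R, |∑' k, f (y - x k)| ∂μ ≤
      (R + 1 + r / 2) ^ finrank ℝ E * ∫ y, |f y| ∂μ := by
  set F := (finite_setOf_dist_le hr hx c (R + 1)).toFinset
  have hF : ∀ k, dist (x k) c ≤ R + 1 → k ∈ F := fun k hk => by simpa [F] using hk
  have hint : ∀ k, Integrable (fun y => |f (y - x k)|) μ := fun k => (hfi.comp_sub_right _).abs
  have hsum : ∫ y in closedBall c R, |∑' k, f (y - x k)| ∂μ ≤ F.card * ∫ y, |f y| ∂μ :=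
    calc ∫ y in closedBall c R, |∑' k, f (y - x k)| ∂μ
        = ∫ y in closedBall c R, |∑ k ∈ F, f (y - x k)| ∂μ :=
          setIntegral_congr_fun measurableSet_closedBall fun y hy =>
            congrArg abs (eqOn_tsum_comp_sub_sum hf hF hy)
      _ ≤ ∫ y in closedBall c R, ∑ k ∈ F, |f (y - x k)| ∂μ :=
          integral_mono_of_nonneg (ae_of_all _ fun _ => abs_nonneg _)
            (integrable_finsetSum F fun k _ => hint k).integrableOn
            (ae_of_all _ fun _ => Finset.abs_sum_le_sum_abs _ _)
      _ ≤ ∫ y, ∑ k ∈ F, |f (y - x k)| ∂μ :=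
          setIntegral_le_integral (integrable_finsetSum F fun k _ => hint k)
            (ae_of_all _ fun _ => Finset.sum_nonneg fun _ _ => abs_nonneg _)
      _ = F.card * ∫ y, |f y| ∂μ := by
          rw [integral_finsetSum F fun k _ => hint k]
          simp [integral_sub_right_eq_self (fun y => |f y|)]
  have hcard := card_mul_pow_le_of_pairwise_le_dist hr hx (by linarith : 0 ≤ R + 1) (F := F)
    fun k hk => by simpa [F] using hk
  have hf0 : 0 ≤ ∫ y, |f y| ∂μ := integral_nonneg fun _ => abs_nonneg _
  calc (r / 2) ^ finrank ℝ E * ∫ y in closedBall c R, |∑' k, f (y - x k)| ∂μ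
      ≤ (r / 2) ^ finrank ℝ E * (F.card * ∫ y, |f y| ∂μ) := by gcongr
    _ = (F.card * (r / 2) ^ finrank ℝ E) * ∫ y, |f y| ∂μ := by ring
    _ ≤ (R + 1 + r / 2) ^ finrank ℝ E * ∫ y, |f y| ∂μ := by gcongr

end SeparatedTranslates

section SeparatedTranslatesBMO

variable {n : ℕ} {f : (Fin n → ℝ) → ℝ}

lemma integral_abs_le_of_support_subset_closedBall (hn : 0 < n) (hloc : LocallyIntegrable f)
    (hf : support f ⊆ closedBall 0 1) (hb : bmoN f ≠ ⊤) :
    ∫ y, |f y| ≤ 4 ^ n * (4 ^ n + 1) * (bmoN f).toReal := by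
  set s := cube (fun _ : Fin n => (-1 : ℝ)) 4
  set t := cube (fun _ : Fin n => (2 : ℝ)) 1
  have hts : t ⊆ s := fun y hy =>
    ⟨fun i => by linarith [hy.1 i], fun i => by linarith [hy.2 i]⟩
  have hft : ∀ y ∈ t, f y = 0 := fun y hy => notMem_support.1 fun hy' => by
    have h₁ : |y ⟨0, hn⟩| ≤ 1 := (norm_le_pi_norm y _).trans (mem_closedBall_zero_iff.1 (hf hy'))
    linarith [le_abs_self (y ⟨0, hn⟩), hy.1 ⟨0, hn⟩]
  have hfs : ∫ y in s, |f y| = ∫ y, |f y| := setIntegral_eq_integral_of_forall_compl_eq_zero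
    fun y hy => by
      by_contra hne
      have hy' := mem_closedBall_zero_iff.1 (hf (abs_ne_zero.1 hne))
      refine hy ⟨fun i => ?_, fun i => ?_⟩ <;>
        linarith [abs_le.1 ((norm_le_pi_norm y i).trans hy')]
  have key := measureReal_mul_setIntegral_abs_le_of_ae_eq_zero hts
    (hloc.integrableOn_isCompact isCompact_Icc) measure_Icc_lt_top.ne
    (ae_restrict_of_forall_mem measurableSet_Icc hft)
  have hosc : ∫ y in s, |f y - ⨍ z in s, f z| = 4 ^ n * oscN f s := by
    rw [oscN, ← volume_real_cube (fun _ => -1) (by norm_num : (0 : ℝ) ≤ 4), ← smul_eq_mul,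
      measure_smul_setAverage (s := s) _ measure_Icc_lt_top.ne]
  rw [volume_real_cube _ (by norm_num), volume_real_cube _ (by norm_num), one_pow, one_mul, hfs,
    hosc] at key
  calc ∫ y, |f y| ≤ (4 ^ n + 1) * (4 ^ n * oscN f s) := key
    _ ≤ (4 ^ n + 1) * (4 ^ n * (bmoN f).toReal) := by
        gcongr
        exact oscN_le_toReal_bmoN hb _ (by norm_num)
    _ = 4 ^ n * (4 ^ n + 1) * (bmoN f).toReal := by ring

variable {β : Type*} {x : β → Fin n → ℝ}

lemma oscN_cube_tsum_comp_sub_le_toReal_bmoN [Nonempty β] (hb : bmoN f ≠ ⊤)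
    (hf : support f ⊆ closedBall 0 1) (hx : Pairwise fun k m => 3 ≤ dist (x k) (x m))
    (a : Fin n → ℝ) {l : ℝ} (hl : 0 < l) (hl₁ : l < 1) :
    oscN (fun y => ∑' k, f (y - x k)) (cube a l) ≤ (bmoN f).toReal := by
  obtain ⟨k, hk⟩ := exists_eqOn_tsum_comp_sub hf hx (c := fun i => a i + l / 2)
    (by linarith : l / 2 < 1 / 2)
  rw [← cube_eq_closedBall a hl.le] at hk
  rw [oscN_congr (A := cube a l) measurableSet_Icc hk, oscN_comp_sub_cube]
  exact oscN_le_toReal_bmoN hb _ hl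

lemma oscN_cube_tsum_comp_sub_le_integral_abs (hfi : Integrable f)
    (hf : support f ⊆ closedBall 0 1)
    (hx : Pairwise fun k m => 3 ≤ dist (x k) (x m)) (a : Fin n → ℝ) {l : ℝ} (hl : 1 ≤ l) :
    oscN (fun y => ∑' k, f (y - x k)) (cube a l) ≤ 2 ^ (n + 1) * ∫ y, |f y| := by
  have hcube := cube_eq_closedBall a (by linarith : 0 ≤ l)
  have hI := pow_mul_setIntegral_abs_tsum_comp_sub_le hfi hf three_pos hx (fun i => a i + l / 2)
    (by linarith : 0 ≤ l / 2)
  rw [finrank_fin_fun, ← hcube] at hI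
  have hpow : (l / 2 + 1 + 3 / 2) ^ n ≤ (3 / 2) ^ n * (2 * l) ^ n := by
    rw [← mul_pow]; gcongr; linarith
  have hf0 : 0 ≤ ∫ y, |f y| := integral_nonneg fun _ => abs_nonneg _
  have hint : ∫ y in cube a l, |∑' k, f (y - x k)| ≤ (2 * l) ^ n * ∫ y, |f y| := by
    refine le_of_mul_le_mul_left ?_ (by positivity : (0 : ℝ) < (3 / 2) ^ n)
    calc _ ≤ (l / 2 + 1 + 3 / 2) ^ n * ∫ y, |f y| := hI
      _ ≤ (3 / 2) ^ n * (2 * l) ^ n * ∫ y, |f y| := by gcongr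
      _ = _ := by ring
  calc oscN (fun y => ∑' k, f (y - x k)) (cube a l)
      ≤ 2 * (l ^ n)⁻¹ * ∫ y in cube a l, |∑' k, f (y - x k)| :=
        oscN_le_two_mul_setIntegral_abs (by linarith)
          (hcube ▸ integrableOn_tsum_comp_sub hfi hf three_pos hx _ _)
    _ ≤ 2 * (l ^ n)⁻¹ * ((2 * l) ^ n * ∫ y, |f y|) := by gcongr
    _ = 2 ^ (n + 1) * ∫ y, |f y| := by
        field_simp
        ring

end SeparatedTranslatesBMO

/-- there is a dimensional constant `C(n)` such that: if `f ∈ BMO(ℝⁿ)`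
is supported in `Q₀ = [−1,1]ⁿ` and `(x_k)` is a sequence of points of ℝⁿ whose mutual
Euclidean distances are at least `3√n`, then `g = Σ_k f(· − x_k)` belongs to `BMO(ℝⁿ)`
with `‖g‖_{BMO(ℝⁿ)} ≤ C(n) ‖f‖_{BMO(ℝⁿ)}`. -/
theorem bmo_of_separated_translates (n : ℕ) (hn : 1 ≤ n) :
    ∃ C : ℝ, 0 < C ∧
      ∀ f : (Fin n → ℝ) → ℝ, LocallyIntegrable f volume → bmoN f ≠ ⊤ →
        (∀ y ∉ Set.Icc (fun _ : Fin n => (-1 : ℝ)) (fun _ => 1), f y = 0) →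
      ∀ x : ℕ → (Fin n → ℝ),
        (∀ k m : ℕ, k ≠ m →
          3 * Real.sqrt n ≤ Real.sqrt (∑ i : Fin n, (x k i - x m i) ^ 2)) →
        LocallyIntegrable (fun y => ∑' k : ℕ, f (y - x k)) volume ∧
        bmoN (fun y => ∑' k : ℕ, f (y - x k)) ≤ ENNReal.ofReal C * bmoN f := by
  refine ⟨2 ^ (n + 1) * (4 ^ n * (4 ^ n + 1)), by positivity, ?_⟩
  intro f hloc hb hsupp x hsep
  have hf : support f ⊆ closedBall 0 1 := fun y hy => by
    by_contra h
    exact hy (hsupp y (by rwa [Icc_const_neg_const_eq_closedBall zero_le_one]))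
  have hfi : Integrable f := (integrableOn_iff_integrable_of_support_subset hf).1
    (hloc.integrableOn_isCompact (isCompact_closedBall 0 1))
  have hx : Pairwise fun k m => 3 ≤ dist (x k) (x m) := fun k m hkm =>
    le_dist_of_mul_sqrt_le hn (hsep k m hkm)
  refine ⟨locallyIntegrable_tsum_comp_sub hfi hf three_pos hx, ?_⟩
  have hM : 0 ≤ (bmoN f).toReal := ENNReal.toReal_nonneg
  have hL1 := integral_abs_le_of_support_subset_closedBall hn hloc hf hb
  rw [← ENNReal.ofReal_toReal hb, ← ENNReal.ofReal_mul (by positivity)]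
  refine bmoN_le_ofReal fun a l hl => ?_
  rcases lt_or_ge l 1 with hl₁ | hl₁
  · refine (oscN_cube_tsum_comp_sub_le_toReal_bmoN hb hf hx a hl hl₁).trans ?_
    have h₂ : (1 : ℝ) ≤ 2 ^ (n + 1) := one_le_pow₀ one_le_two
    have h₄ : (1 : ℝ) ≤ 4 ^ n := one_le_pow₀ (by norm_num)
    exact le_mul_of_one_le_left hM (one_le_mul_of_one_le_of_one_le h₂
      (one_le_mul_of_one_le_of_one_le h₄ (by linarith)))
  · calc _ ≤ 2 ^ (n + 1) * ∫ y, |f y| :=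
          oscN_cube_tsum_comp_sub_le_integral_abs hfi hf hx a hl₁
      _ ≤ 2 ^ (n + 1) * (4 ^ n * (4 ^ n + 1) * (bmoN f).toReal) := by gcongr
      _ = _ := by ring
end
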